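/- Let U ⊆ ℝ^m be open, F : U → ℝ^ℓ smooth, f : N → U a smooth embedding of an n-manifold N, and let P be any property of smooth maps N → ℝ^ℓ that is preserved under postcomposition with linear isomorphisms of ℝ^ℓ. Suppose there is a Lebesgue-null set Σ ⊆ L(ℝ^{m+ℓ}, ℝ^ℓ) such that for every Π ∉ Σ the map Π ∘ f̃ ∘ f has property P, where f̃(x) = (F(x), x). Then there is a Lebesgue-null set Σ̃ ⊆ L(ℝ^m, ℝ^ℓ) such that for every α ∉ Σ̃ the map F_α ∘ f = (F + α) ∘ f has property P. -/

import Mathlib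

open MeasureTheory
open scoped Manifold

private lemma null_preimage_clequiv {E F : Type*}
    [NormedAddCommGroup E] [NormedSpace ℝ E] [FiniteDimensional ℝ E]
    [MeasureSpace E] [BorelSpace E]
    [NormedAddCommGroup F] [NormedSpace ℝ F] [FiniteDimensional ℝ F]
    [MeasureSpace F] [BorelSpace F] [SecondCountableTopology F]
    [(volume : Measure E).IsAddHaarMeasure] [(volume : Measure F).IsAddHaarMeasure]
    (e : E ≃L[ℝ] F) {s : Set F} (hs : volume s = 0) :
    volume (e ⁻¹' s) = 0 := by
  haveI : ((volume : Measure E).map e).IsAddHaarMeasure :=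
    e.isAddHaarMeasure_map volume
  have habs : ((volume : Measure E).map e) ≪ (volume : Measure F) :=
    Measure.absolutelyContinuous_isAddHaarMeasure _ _
  set t : Set F := toMeasurable volume s with ht
  have htm : MeasurableSet t := measurableSet_toMeasurable _ _
  have ht0 : volume t = 0 := by rw [ht, measure_toMeasurable]; exact hs
  have : ((volume : Measure E).map e) t = 0 := habs ht0
  rw [Measure.map_apply e.continuous.measurable htm] at this
  exact measure_mono_null (Set.preimage_mono (subset_toMeasurable _ _)) this

/-- let f : N → U ⊆ ℝ^m be a smooth embedding, F : U → ℝ^ℓ smooth,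
f̃(x) = (F x, x) ∈ ℝ^{ℓ+m}, and let P be a property of maps N → ℝ^ℓ preserved by
postcomposition with linear isomorphisms of ℝ^ℓ.  If for almost every linear
Π : ℝ^{ℓ+m} → ℝ^ℓ (an ℓ×(ℓ+m) matrix) the map Π ∘ f̃ ∘ f has property P, then for
almost every linear α : ℝ^m → ℝ^ℓ (an ℓ×m matrix) the map F_α ∘ f = (F + α) ∘ f
has property P. -/
theorem stmt_19 (n m ℓ : ℕ) {N : Type*} [TopologicalSpace N]
    [ChartedSpace (EuclideanSpace ℝ (Fin n)) N] [IsManifold (𝓡 n) (⊤ : ℕ∞) N]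
    (U : Set (Fin m → ℝ)) (hU : IsOpen U)
    (F : (Fin m → ℝ) → (Fin ℓ → ℝ)) (hF : ContDiffOn ℝ (⊤ : ℕ∞) F U)
    (f : N → (Fin m → ℝ)) (hfU : ∀ x, f x ∈ U)
    (hf_smooth : ContMDiff (𝓡 n) 𝓘(ℝ, Fin m → ℝ) (⊤ : ℕ∞) f)
    (hf_inj : Function.Injective f)
    (hf_imm : ∀ x, Function.Injective (mfderiv (𝓡 n) 𝓘(ℝ, Fin m → ℝ) f x))
    (hf_emb : Topology.IsEmbedding f)
    (P : (N → (Fin ℓ → ℝ)) → Prop)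
    (hP : ∀ (g : N → (Fin ℓ → ℝ)) (e : (Fin ℓ → ℝ) ≃ₗ[ℝ] (Fin ℓ → ℝ)),
      P g → P (fun x => e (g x)))
    (Sig : Set (Fin ℓ → Fin (ℓ + m) → ℝ)) (hSig : volume Sig = 0)
    (h : ∀ Pi ∉ Sig,
      P (fun x i => ∑ j, Pi i j * Fin.append (F (f x)) (f x) j)) :
    ∃ SigT : Set (Fin ℓ → Fin m → ℝ), volume SigT = 0 ∧
      ∀ α ∉ SigT, P (fun x i => F (f x) i + ∑ j, α i j * f x j) := by
  classical
  haveI : (volume : Measure (Fin ℓ → Fin ℓ → ℝ)).IsAddHaarMeasure := by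
    rw [volume_pi]; exact Measure.pi.isAddHaarMeasure _
  haveI : (volume : Measure (Fin ℓ → Fin m → ℝ)).IsAddHaarMeasure := by
    rw [volume_pi]; exact Measure.pi.isAddHaarMeasure _
  haveI : (volume : Measure (Fin ℓ → Fin (ℓ + m) → ℝ)).IsAddHaarMeasure := by
    rw [volume_pi]; exact Measure.pi.isAddHaarMeasure _
  haveI hH : (volume : Measure ((Fin ℓ → Fin ℓ → ℝ) × (Fin ℓ → Fin m → ℝ))).IsAddHaarMeasure := by
    rw [Measure.volume_eq_prod]; exact MeasureTheory.Measure.prod.instIsAddHaarMeasure _ _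
  -- measurable null superset of Sig
  set SigM : Set (Fin ℓ → Fin (ℓ + m) → ℝ) := toMeasurable volume Sig with hSigMdef
  have hSigM_meas : MeasurableSet SigM := measurableSet_toMeasurable _ _
  have hSigM0 : volume SigM = 0 := by rw [hSigMdef, measure_toMeasurable]; exact hSig
  have hSig_sub : Sig ⊆ SigM := subset_toMeasurable _ _
  -- the gluing linear equivalence
  let Ψ : ((Fin ℓ → Fin ℓ → ℝ) × (Fin ℓ → Fin m → ℝ)) ≃ₗ[ℝ] (Fin ℓ → Fin (ℓ + m) → ℝ) :=
    { toFun := fun p i => Fin.append (p.1 i) (p.2 i)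
      invFun := fun Q => (fun i j => Q i (Fin.castAdd m j), fun i j => Q i (Fin.natAdd ℓ j))
      map_add' := by
        intro p q
        funext i j
        induction j using Fin.addCases with
        | left j => simp [Fin.append_left]
        | right j => simp [Fin.append_right]
      map_smul' := by
        intro c p
        funext i j
        induction j using Fin.addCases with
        | left j => simp [Fin.append_left]
        | right j => simp [Fin.append_right]
      left_inv := by
        intro p
        refine Prod.ext ?_ ?_ <;> funext i j <;>
          simp [Fin.append_left, Fin.append_right]
      right_inv := by
        intro Q
        funext i j
        induction j using Fin.addCases with
        | left j => simp [Fin.append_left]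
        | right j => simp [Fin.append_right] }
  let Ψc := Ψ.toContinuousLinearEquiv
  -- the preimage of SigM is null
  have hpre : volume (Ψc ⁻¹' SigM) = 0 := null_preimage_clequiv Ψc hSigM0
  have hpre' : ((volume : Measure (Fin ℓ → Fin ℓ → ℝ)).prod
      (volume : Measure (Fin ℓ → Fin m → ℝ))) (Ψc ⁻¹' SigM) = 0 := by
    rw [← Measure.volume_eq_prod]; exact hpre
  -- Fubini : a.e. slice is null
  have hae := Measure.measure_ae_null_of_prod_null hpre'
  have hae' : ∀ᵐ Λ : Fin ℓ → Fin ℓ → ℝ,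
      volume (Prod.mk Λ ⁻¹' (Ψc ⁻¹' SigM)) = 0 := by exact hae
  rw [ae_iff] at hae'
  -- there is an invertible Λ₀ with null slice
  have hGopen : IsOpen {Λ : Fin ℓ → Fin ℓ → ℝ | (Matrix.of Λ).det ≠ 0} := by
    have hcont : Continuous fun Λ : Fin ℓ → Fin ℓ → ℝ => (Matrix.of Λ).det :=
      Continuous.matrix_det (by exact continuous_id)
    exact isOpen_compl_singleton.preimage hcont
  have hGne : (Matrix.of.symm (1 : Matrix (Fin ℓ) (Fin ℓ) ℝ)) ∈
      {Λ : Fin ℓ → Fin ℓ → ℝ | (Matrix.of Λ).det ≠ 0} := by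
    simp
  have hGpos : 0 < volume {Λ : Fin ℓ → Fin ℓ → ℝ | (Matrix.of Λ).det ≠ 0} :=
    hGopen.measure_pos volume ⟨_, hGne⟩
  have hne : ({Λ : Fin ℓ → Fin ℓ → ℝ | (Matrix.of Λ).det ≠ 0} \
      {Λ : Fin ℓ → Fin ℓ → ℝ | ¬ volume (Prod.mk Λ ⁻¹' (Ψc ⁻¹' SigM)) = 0}).Nonempty := by
    apply nonempty_of_measure_ne_zero (μ := volume)
    rw [measure_diff_null hae']
    exact hGpos.ne'
  obtain ⟨Λ₀, hΛ₀G, hΛ₀T⟩ := hne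
  have hslice : volume (Prod.mk Λ₀ ⁻¹' (Ψc ⁻¹' SigM)) = 0 := not_not.mp hΛ₀T
  -- the invertible matrix M
  set M : Matrix (Fin ℓ) (Fin ℓ) ℝ := Matrix.of Λ₀ with hMdef
  have hMdet : IsUnit M.det := isUnit_iff_ne_zero.mpr hΛ₀G
  haveI hMinv : Invertible M := M.invertibleOfIsUnitDet hMdet
  -- left multiplication by M as a linear equivalence of ℓ×m matrices
  let L : (Fin ℓ → Fin m → ℝ) ≃ₗ[ℝ] (Fin ℓ → Fin m → ℝ) :=
    { toFun := fun β => Matrix.of.symm (M * Matrix.of β)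
      invFun := fun β => Matrix.of.symm (⅟M * Matrix.of β)
      map_add' := by
        intro a b
        show Matrix.of.symm (M * (Matrix.of a + Matrix.of b)) = _
        rw [Matrix.mul_add]
        rfl
      map_smul' := by
        intro c a
        show Matrix.of.symm (M * (c • Matrix.of a)) = _
        rw [Matrix.mul_smul]
        rfl
      left_inv := by
        intro a
        show Matrix.of.symm (⅟M * (M * Matrix.of a)) = a
        rw [← Matrix.mul_assoc, invOf_mul_self, Matrix.one_mul]
        rfl
      right_inv := by
        intro a
        show Matrix.of.symm (M * (⅟M * Matrix.of a)) = a
        rw [← Matrix.mul_assoc, mul_invOf_self, Matrix.one_mul]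
        rfl }
  let Lc := L.toContinuousLinearEquiv
  refine ⟨Lc ⁻¹' (Prod.mk Λ₀ ⁻¹' (Ψc ⁻¹' SigM)), null_preimage_clequiv Lc hslice, ?_⟩
  intro β hβ
  have hPi0 : Ψc (Λ₀, Lc β) ∉ Sig := fun hc => hβ (hSig_sub hc)
  have hPg := h _ hPi0
  -- rewrite the map in matrix form
  have hg1 : (fun x i => ∑ j, (Ψc (Λ₀, Lc β)) i j * Fin.append (F (f x)) (f x) j)
      = fun x => M.mulVec (F (f x)) + (M * Matrix.of β).mulVec (f x) := by
    funext x i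
    have : ∀ j : Fin (ℓ + m), (Ψc (Λ₀, Lc β)) i j
        = Fin.append (Λ₀ i) ((M * Matrix.of β) i) j := by
      intro j
      rfl
    simp only [this]
    rw [Fin.sum_univ_add]
    simp [Fin.append_left, Fin.append_right, Matrix.mulVec, dotProduct, hMdef]
  rw [hg1] at hPg
  have hfinal := hP _ ((⅟M).toLinearEquiv' (invertibleInvOf)) hPg
  convert hfinal using 1
  funext x i
  have : ((⅟M).toLinearEquiv' (invertibleInvOf))
      (M.mulVec (F (f x)) + (M * Matrix.of β).mulVec (f x))
      = (⅟M).mulVec (M.mulVec (F (f x)) + (M * Matrix.of β).mulVec (f x)) := by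
    rfl
  rw [this, Matrix.mulVec_add, Matrix.mulVec_mulVec, Matrix.mulVec_mulVec,
    invOf_mul_self, ← Matrix.mul_assoc, invOf_mul_self, Matrix.one_mul, Matrix.one_mulVec]
  simp [Matrix.mulVec, dotProduct]
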